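/- Let M and N be model categories with pushouts, let n ≥ 0, and equip Fun([n], M) and Fun([n], N) with the model structures in which weak equivalences and fibrations are componentwise (the projective model structures). If F : M ⇄ N : G is a Quillen adjunction, then the induced adjunction (F ∘ −) : Fun([n], M) ⇄ Fun([n], N) : (G ∘ −) given by postcomposition (whiskering) is a Quillen adjunction; and if F ⊣ G is moreover a Quillen equivalence, then the induced adjunction is a Quillen equivalence. -/

import Mathlib

open CategoryTheory Limits

universe w v u

namespace Paper

/-- `f` is a retract of `g` in the arrow category. -/
def IsRetract {M : Type u} [Category.{v} M] {a b x y : M} (f : a ⟶ b) (g : x ⟶ y) : Prop :=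
  ∃ (i : a ⟶ x) (r : x ⟶ a) (i' : b ⟶ y) (r' : y ⟶ b),
    i ≫ r = 𝟙 a ∧ i' ≫ r' = 𝟙 b ∧ i ≫ g = f ≫ i' ∧ g ≫ r' = r ≫ f

/-- A (Quillen) model structure on a category `M`: classes of weak equivalences,
cofibrations and fibrations, containing all isomorphisms, with the two-out-of-three
property for weak equivalences, all three classes closed under retracts, the lifting
axioms, and the two factorization axioms. -/
structure ModelStructure (M : Type u) [Category.{v} M] where
  W : MorphismProperty M
  Cof : MorphismProperty M
  Fib : MorphismProperty M
  iso_W : MorphismProperty.isomorphisms M ≤ W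
  iso_Cof : MorphismProperty.isomorphisms M ≤ Cof
  iso_Fib : MorphismProperty.isomorphisms M ≤ Fib
  two_of_three : W.HasTwoOutOfThreeProperty
  retract_W : ∀ {a b x y : M} (f : a ⟶ b) (g : x ⟶ y), IsRetract f g → W g → W f
  retract_Cof : ∀ {a b x y : M} (f : a ⟶ b) (g : x ⟶ y), IsRetract f g → Cof g → Cof f
  retract_Fib : ∀ {a b x y : M} (f : a ⟶ b) (g : x ⟶ y), IsRetract f g → Fib g → Fib f
  lift_Cof_trivFib : ∀ {a b x y : M} (i : a ⟶ b) (p : x ⟶ y),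
    Cof i → W p → Fib p → HasLiftingProperty i p
  lift_trivCof_Fib : ∀ {a b x y : M} (i : a ⟶ b) (p : x ⟶ y),
    Cof i → W i → Fib p → HasLiftingProperty i p
  fact_Cof_trivFib : ∀ {x y : M} (f : x ⟶ y),
    ∃ (z : M) (i : x ⟶ z) (p : z ⟶ y), Cof i ∧ W p ∧ Fib p ∧ i ≫ p = f
  fact_trivCof_Fib : ∀ {x y : M} (f : x ⟶ y),
    ∃ (z : M) (i : x ⟶ z) (p : z ⟶ y), Cof i ∧ W i ∧ Fib p ∧ i ≫ p = f

variable {M : Type u} [Category.{v} M]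

/-- An object is cofibrant if the map from the initial object to it is a cofibration. -/
def ModelStructure.Cofibrant [HasInitial M] (S : ModelStructure M) (x : M) : Prop :=
  S.Cof (initial.to x)

/-- An object is fibrant if the map from it to the terminal object is a fibration. -/
def ModelStructure.Fibrant [HasTerminal M] (S : ModelStructure M) (x : M) : Prop :=
  S.Fib (terminal.from x)

end Paper

namespace Paper

variable {M : Type u} [Category.{v} M] [HasPushouts M]

/-- For a natural transformation `f : X ⟶ Y` of functors `[n] ⥤ M` and `i : Fin n`, the
corner map `X_{i+1} ⊔_{X_i} Y_i ⟶ Y_{i+1}` induced by the naturality square of `f` at the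
map `i → i+1`. -/
noncomputable def cornerMap {n : ℕ} {X Y : Fin (n + 1) ⥤ M} (f : X ⟶ Y) (i : Fin n) :
    pushout (X.map (homOfLE (Fin.castSucc_lt_succ (i := i)).le)) (f.app i.castSucc) ⟶
      Y.obj i.succ :=
  pushout.desc (f.app i.succ) (Y.map (homOfLE (Fin.castSucc_lt_succ (i := i)).le))
    (f.naturality (homOfLE (Fin.castSucc_lt_succ (i := i)).le))

end Paper

/-! Cofibrations are exactly the maps with the left lifting property against trivial fibrations,
so they are stable under pushout and composition, and by induction along `[n]` every component
of a projective cofibration is a cofibration. Since `F` is a left adjoint it preserves pushouts,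
so each corner map of `F ∘ f` is, up to the comparison isomorphism, `F` applied to the
corresponding corner map of `f`; hence whiskering by `F` preserves projective cofibrations, and
trivial ones because weak equivalences are componentwise. For the Quillen equivalence, the
whiskered adjunction's hom-equivalence, weak equivalences, and (through the components of
`⊥ ⟶ X` and `Y ⟶ ⊤`) cofibrancy and fibrancy are all computed componentwise. -/

open MorphismProperty

namespace Paper

variable {M : Type*} [Category M]

lemma isRetract_of_retractArrow {a b x y : M} {f : a ⟶ b} {g : x ⟶ y} (h : RetractArrow f g) :
    IsRetract f g :=
  ⟨h.i.left, h.r.left, h.i.right, h.r.right, h.retract_left, h.retract_right, h.i_w, h.r_w.symm⟩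

namespace ModelStructure

variable (S : ModelStructure M)

lemma cof_eq_llp : S.Cof = (S.W ⊓ S.Fib).llp := by
  ext a b f
  refine ⟨fun hf _ _ p hp ↦ S.lift_Cof_trivFib f p hf hp.1 hp.2, fun hf ↦ ?_⟩
  obtain ⟨_, i, p, hi, hpW, hpFib, fac⟩ := S.fact_Cof_trivFib f
  have := hf p ⟨hpW, hpFib⟩
  exact S.retract_Cof f i (isRetract_of_retractArrow (.ofLeftLiftingProperty fac)) hi

instance : S.Cof.IsStableUnderCobaseChange := by
  rw [cof_eq_llp]
  infer_instance

instance : S.Cof.IsMultiplicative := by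
  rw [cof_eq_llp]
  infer_instance

variable {S}

lemma cof_isIso_comp {a x y : M} (e : a ⟶ x) [IsIso e] {f : x ⟶ y} (hf : S.Cof f) :
    S.Cof (e ≫ f) :=
  S.retract_Cof _ f ⟨e, inv e, 𝟙 y, 𝟙 y, by simp, by simp, by simp, by simp⟩ hf

lemma fib_comp_isIso {x y z : M} {f : x ⟶ y} (e : y ⟶ z) [IsIso e] (hf : S.Fib f) :
    S.Fib (f ≫ e) :=
  S.retract_Fib _ f ⟨𝟙 x, 𝟙 x, inv e, e, by simp, by simp, by simp, by simp⟩ hf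

lemma cofibrant_obj [HasInitial M] {J : Type*} [Category J] {X : J ⥤ M} (j : J)
    (h : S.Cof ((initial.to X).app j)) : S.Cofibrant (X.obj j) := by
  have e : ⊥_ M ≅ (⊥_ (J ⥤ M)).obj j :=
    initialIsInitial.uniqueUpToIso (initialIsInitial.isInitialObj ((evaluation J M).obj j) _)
  rw [Cofibrant, initial.hom_ext (initial.to _) (e.hom ≫ (initial.to X).app j)]
  exact cof_isIso_comp _ h

lemma fibrant_obj [HasTerminal M] {J : Type*} [Category J] {Y : J ⥤ M} (j : J)
    (h : S.Fib ((terminal.from Y).app j)) : S.Fibrant (Y.obj j) := by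
  have e : (⊤_ (J ⥤ M)).obj j ≅ ⊤_ M :=
    (terminalIsTerminal.isTerminalObj ((evaluation J M).obj j) _).uniqueUpToIso terminalIsTerminal
  rw [Fibrant, terminal.hom_ext (terminal.from _) ((terminal.from Y).app j ≫ e.hom)]
  exact fib_comp_isIso _ h

section Diagrams

variable [HasPushouts M] {n : ℕ} {X Y : Fin (n + 1) ⥤ M}

variable (S) in
def ProjectiveCof (f : X ⟶ Y) : Prop :=
  S.Cof (f.app 0) ∧ ∀ i : Fin n, S.Cof (cornerMap f i)

lemma app_succ_eq_pushout_inl_comp_cornerMap (f : X ⟶ Y) (i : Fin n) :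
    f.app i.succ = pushout.inl _ _ ≫ cornerMap f i :=
  (pushout.inl_desc _ _ _).symm

lemma ProjectiveCof.cof_app {f : X ⟶ Y} (hf : S.ProjectiveCof f) (i : Fin (n + 1)) :
    S.Cof (f.app i) := by
  induction i using Fin.induction with
  | zero => exact hf.1
  | succ i ih =>
    rw [app_succ_eq_pushout_inl_comp_cornerMap]
    exact S.Cof.comp_mem _ _ (S.Cof.pushout_inl _ _ ih) (hf.2 i)

lemma ProjectiveCof.cofibrant_obj [HasInitial M] {X : Fin (n + 1) ⥤ M}
    (hX : S.ProjectiveCof (initial.to X)) (i : Fin (n + 1)) : S.Cofibrant (X.obj i) :=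
  ModelStructure.cofibrant_obj i (hX.cof_app i)

end Diagrams

end ModelStructure

section Whiskering

variable {N : Type*} [Category N] [HasPushouts M] [HasPushouts N] {n : ℕ}
  {X Y : Fin (n + 1) ⥤ M}

lemma cornerMap_whiskerRight (F : M ⥤ N) (f : X ⟶ Y) (i : Fin n) :
    cornerMap (Functor.whiskerRight f F) i =
      pushoutComparison F (X.map (homOfLE (Fin.castSucc_lt_succ (i := i)).le))
        (f.app i.castSucc) ≫ F.map (cornerMap f i) := by
  apply pushout.hom_ext <;> simp [cornerMap]

lemma ModelStructure.ProjectiveCof.whiskerRight {SM : ModelStructure M} (SN : ModelStructure N)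
    {F : M ⥤ N} [PreservesColimitsOfShape WalkingSpan F]
    (hF : ∀ {a b : M} (f : a ⟶ b), SM.Cof f → SN.Cof (F.map f))
    {f : X ⟶ Y} (hf : SM.ProjectiveCof f) : SN.ProjectiveCof (Functor.whiskerRight f F) := by
  refine ⟨hF _ hf.1, fun i ↦ ?_⟩
  rw [cornerMap_whiskerRight]
  exact ModelStructure.cof_isIso_comp _ (hF _ (hf.2 i))

end Whiskering

end Paper

namespace CategoryTheory.Adjunction

variable {C D E : Type*} [Category C] [Category D] [Category E] {F : D ⥤ E} {G : E ⥤ D}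

lemma whiskerRight_homEquiv_app (adj : F ⊣ G) {X : C ⥤ D} {Y : C ⥤ E}
    (g : X ⋙ F ⟶ Y) (c : C) :
    ((adj.whiskerRight C).homEquiv X Y g).app c = adj.homEquiv (X.obj c) (Y.obj c) (g.app c) := by
  rw [homEquiv_unit, homEquiv_unit]
  simp [Adjunction.whiskerRight]

end CategoryTheory.Adjunction

section Statement10

open Paper

theorem projective_model_structure_quillen_adjunction_whiskering_general
    {M : Type u} {N : Type u'} [Category.{v} M] [Category.{v'} N]
    [HasPushouts M] [HasPushouts N] [HasInitial M] [HasTerminal N]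
    (SM : ModelStructure M) (SN : ModelStructure N) (n : ℕ)
    (TM : ModelStructure (Fin (n + 1) ⥤ M)) (TN : ModelStructure (Fin (n + 1) ⥤ N))
    (hTMW : ∀ {X Y : Fin (n + 1) ⥤ M} (f : X ⟶ Y), TM.W f ↔ ∀ i, SM.W (f.app i))
    (hTMCof : ∀ {X Y : Fin (n + 1) ⥤ M} (f : X ⟶ Y), TM.Cof f ↔
      (SM.Cof (f.app 0) ∧ ∀ i : Fin n, SM.Cof (cornerMap f i)))
    (hTNW : ∀ {X Y : Fin (n + 1) ⥤ N} (f : X ⟶ Y), TN.W f ↔ ∀ i, SN.W (f.app i))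
    (hTNFib : ∀ {X Y : Fin (n + 1) ⥤ N} (f : X ⟶ Y), TN.Fib f ↔ ∀ i, SN.Fib (f.app i))
    (hTNCof : ∀ {X Y : Fin (n + 1) ⥤ N} (f : X ⟶ Y), TN.Cof f ↔
      (SN.Cof (f.app 0) ∧ ∀ i : Fin n, SN.Cof (cornerMap f i)))
    (F : M ⥤ N) (G : N ⥤ M) (adj : F ⊣ G)
    (hF_cof : ∀ {a b : M} (f : a ⟶ b), SM.Cof f → SN.Cof (F.map f))
    (hF_trivCof : ∀ {a b : M} (f : a ⟶ b), SM.Cof f → SM.W f →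
      SN.Cof (F.map f) ∧ SN.W (F.map f)) :
    (∀ {X Y : Fin (n + 1) ⥤ M} (f : X ⟶ Y), TM.Cof f →
      TN.Cof (((Functor.whiskeringRight (Fin (n + 1)) M N).obj F).map f)) ∧
    (∀ {X Y : Fin (n + 1) ⥤ M} (f : X ⟶ Y), TM.Cof f → TM.W f →
      TN.Cof (((Functor.whiskeringRight (Fin (n + 1)) M N).obj F).map f) ∧
      TN.W (((Functor.whiskeringRight (Fin (n + 1)) M N).obj F).map f)) ∧
    ((∀ (x : M) (y : N), SM.Cofibrant x → SN.Fibrant y →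
        ∀ f : F.obj x ⟶ y, SN.W f ↔ SM.W (adj.homEquiv x y f)) →
      (∀ (X : Fin (n + 1) ⥤ M) (Y : Fin (n + 1) ⥤ N),
        TM.Cofibrant X → TN.Fibrant Y →
        ∀ g : ((Functor.whiskeringRight (Fin (n + 1)) M N).obj F).obj X ⟶ Y,
          TN.W g ↔ TM.W (((adj.whiskerRight (Fin (n + 1))).homEquiv X Y) g))) := by
  have := adj.leftAdjoint_preservesColimits
  have hCof : ∀ {X Y : Fin (n + 1) ⥤ M} (f : X ⟶ Y), TM.Cof f →
      TN.Cof (((Functor.whiskeringRight (Fin (n + 1)) M N).obj F).map f) := fun f hf ↦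
    (hTNCof _).2 (ModelStructure.ProjectiveCof.whiskerRight SN hF_cof ((hTMCof f).1 hf))
  refine ⟨hCof, fun f hf hw ↦ ⟨hCof f hf, ?_⟩, fun hQ X Y hX hY g ↦ ?_⟩
  · have hf : SM.ProjectiveCof f := (hTMCof f).1 hf
    rw [hTMW] at hw
    exact (hTNW _).2 fun i ↦ (hF_trivCof _ (hf.cof_app i) (hw i)).2
  · have hX : SM.ProjectiveCof (initial.to X) := (hTMCof _).1 hX
    rw [hTNW, hTMW]
    refine forall_congr' fun i ↦ ?_
    rw [Adjunction.whiskerRight_homEquiv_app]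
    exact hQ _ _ (hX.cofibrant_obj i) (ModelStructure.fibrant_obj i ((hTNFib _).1 hY i)) (g.app i)

/-- Let `F ⊣ G` be a Quillen adjunction between model categories `M`, `N`
with pushouts, and equip `Fun([n], M)` and `Fun([n], N)` with the projective model
structures (componentwise weak equivalences and fibrations, cofibrations characterized by
corner maps).  Then the adjunction induced by postcomposition (whiskering) is a Quillen
adjunction; and if `F ⊣ G` is a Quillen equivalence then so is the induced adjunction. -/
theorem projective_model_structure_quillen_adjunction_whiskering
    {M : Type u} {N : Type u'} [Category.{v} M] [Category.{v'} N]
    [HasPushouts M] [HasPushouts N] [HasInitial M] [HasTerminal N]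
    (SM : ModelStructure M) (SN : ModelStructure N) (n : ℕ)
    (TM : ModelStructure (Fin (n + 1) ⥤ M)) (TN : ModelStructure (Fin (n + 1) ⥤ N))
    (hTMW : ∀ {X Y : Fin (n + 1) ⥤ M} (f : X ⟶ Y), TM.W f ↔ ∀ i, SM.W (f.app i))
    (hTMFib : ∀ {X Y : Fin (n + 1) ⥤ M} (f : X ⟶ Y), TM.Fib f ↔ ∀ i, SM.Fib (f.app i))
    (hTMCof : ∀ {X Y : Fin (n + 1) ⥤ M} (f : X ⟶ Y), TM.Cof f ↔
      (SM.Cof (f.app 0) ∧ ∀ i : Fin n, SM.Cof (cornerMap f i)))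
    (hTNW : ∀ {X Y : Fin (n + 1) ⥤ N} (f : X ⟶ Y), TN.W f ↔ ∀ i, SN.W (f.app i))
    (hTNFib : ∀ {X Y : Fin (n + 1) ⥤ N} (f : X ⟶ Y), TN.Fib f ↔ ∀ i, SN.Fib (f.app i))
    (hTNCof : ∀ {X Y : Fin (n + 1) ⥤ N} (f : X ⟶ Y), TN.Cof f ↔
      (SN.Cof (f.app 0) ∧ ∀ i : Fin n, SN.Cof (cornerMap f i)))
    (F : M ⥤ N) (G : N ⥤ M) (adj : F ⊣ G)
    (hF_cof : ∀ {a b : M} (f : a ⟶ b), SM.Cof f → SN.Cof (F.map f))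
    (hF_trivCof : ∀ {a b : M} (f : a ⟶ b), SM.Cof f → SM.W f →
      SN.Cof (F.map f) ∧ SN.W (F.map f)) :
    (∀ {X Y : Fin (n + 1) ⥤ M} (f : X ⟶ Y), TM.Cof f →
      TN.Cof (((Functor.whiskeringRight (Fin (n + 1)) M N).obj F).map f)) ∧
    (∀ {X Y : Fin (n + 1) ⥤ M} (f : X ⟶ Y), TM.Cof f → TM.W f →
      TN.Cof (((Functor.whiskeringRight (Fin (n + 1)) M N).obj F).map f) ∧
      TN.W (((Functor.whiskeringRight (Fin (n + 1)) M N).obj F).map f)) ∧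
    ((∀ (x : M) (y : N), SM.Cofibrant x → SN.Fibrant y →
        ∀ f : F.obj x ⟶ y, SN.W f ↔ SM.W (adj.homEquiv x y f)) →
      (∀ (X : Fin (n + 1) ⥤ M) (Y : Fin (n + 1) ⥤ N),
        TM.Cofibrant X → TN.Fibrant Y →
        ∀ g : ((Functor.whiskeringRight (Fin (n + 1)) M N).obj F).obj X ⟶ Y,
          TN.W g ↔ TM.W (((adj.whiskerRight (Fin (n + 1))).homEquiv X Y) g))) :=
  projective_model_structure_quillen_adjunction_whiskering_general SM SN n TM TN hTMW hTMCof hTNW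
    hTNFib hTNCof F G adj hF_cof hF_trivCof

end Statement10
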